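/- arXiv:1401.3272 — 2 statements merged into one kernel-verified Lean document; each statement's English description precedes it below -/
import Mathlib

section
/- Let g and g₀ be nilpotent finite-dimensional real Lie algebras of the same dimension n, each having a 1-dimensional center. If rank(ad*_{g₀}) = n − 1 (i.e., the corresponding simply connected nilpotent Lie group G₀ has square-integrable representations modulo the center) and g ⇝ g₀, then rank(ad*_{g}) = n − 1. -/
/-!
For `ξ₀ ∈ g₀*` of maximal rank `n - 1`, the functionals `η_r = ξ₀ ∘ C_r⁻¹` on `g` satisfy
`B^g_{η_r}(C_r x, C_r y) = ξ₀ (C_r⁻¹ [C_r x, C_r y]) → B^{g₀}_{ξ₀}(x, y)`. The rank of a bilinear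
form can only jump up under small perturbations (linear independence is an open condition), so
`rank B^g_{η_r} ≥ n - 1` for some `r`. Conversely the center lies in the kernel of every `B^g_ξ`,
so `rank (ad*_g) ≤ n - dim Z(g) = n - 1`.
-/

open Filter Topology

/-- `bg₀` (a bracket on `W`) is a contraction of `bg` (a bracket on `V`). -/
def IsContractionOf {V W : Type*} [AddCommGroup V] [Module ℝ V]
    [AddCommGroup W] [Module ℝ W] [TopologicalSpace W]
    (bg : V → V → V) (bg₀ : W → W → W) : Prop :=
  ∃ I : Set ℝ, (𝓝[I \ {0}] (0 : ℝ)).NeBot ∧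
    ∃ C : ℝ → (W ≃ₗ[ℝ] V), ∀ x y : W,
      Tendsto (fun r => (C r).symm (bg (C r x) (C r y))) (𝓝[I \ {0}] (0 : ℝ)) (𝓝 (bg₀ x y))

/-- For `ξ ∈ g*`, the bilinear form `B^g_ξ (x, y) = ξ ⁅x, y⁆`. -/
noncomputable def coadjointForm {g : Type*} [LieRing g] [LieAlgebra ℝ g]
    (ξ : Module.Dual ℝ g) : g →ₗ[ℝ] g →ₗ[ℝ] ℝ :=
  LinearMap.mk₂ ℝ (fun x y => ξ ⁅x, y⁆)
    (fun x x' y => by simp only [add_lie, map_add])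
    (fun c x y => by simp only [smul_lie, map_smul])
    (fun x y y' => by simp only [lie_add, map_add])
    (fun c x y => by simp only [lie_smul, map_smul])

/-- `rank (ad*_g) = max { rank B^g_ξ : ξ ∈ g* }`. -/
noncomputable def coadjointRank (g : Type*) [LieRing g] [LieAlgebra ℝ g] : ℕ :=
  ⨆ ξ : Module.Dual ℝ g, Module.finrank ℝ (LinearMap.range (coadjointForm ξ))

open Module

namespace LinearMap

variable {K M N : Type*} [Field K] [AddCommGroup M] [Module K M] [AddCommGroup N] [Module K N]

theorem exists_linearIndependent_comp (f : M →ₗ[K] N) [Module.Finite K (range f)] :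
    ∃ s : Fin (finrank K (range f)) → M, LinearIndependent K (f ∘ s) := by
  let b := finBasis K (range f)
  choose s hs using fun i => (b i).2
  refine ⟨s, ?_⟩
  have hfs : f ∘ s = (range f).subtype ∘ b := funext hs
  rw [hfs]
  exact b.linearIndependent.map' _ (Submodule.ker_subtype _)

theorem card_le_finrank_range {ι : Type*} [Fintype ι] (f : M →ₗ[K] N) [Module.Finite K (range f)]
    {s : ι → M} (hs : LinearIndependent K (f ∘ s)) : Fintype.card ι ≤ finrank K (range f) :=
  (LinearIndependent.of_comp (range f).subtype
    (v := fun i => (⟨f (s i), mem_range_self f _⟩ : range f)) hs).fintype_card_le_finrank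

theorem eventually_finrank_range_le_of_tendsto {𝕜 : Type*} [NontriviallyNormedField 𝕜]
    [CompleteSpace 𝕜] {V W V' W' α : Type*} [AddCommGroup V] [Module 𝕜 V] [AddCommGroup W]
    [Module 𝕜 W] [FiniteDimensional 𝕜 W] [AddCommGroup V'] [Module 𝕜 V'] [AddCommGroup W']
    [Module 𝕜 W'] [FiniteDimensional 𝕜 W'] {l : Filter α}
    {B₀ : V →ₗ[𝕜] W →ₗ[𝕜] 𝕜} {B : α → V' →ₗ[𝕜] W' →ₗ[𝕜] 𝕜} {u : α → V → V'} {v : α → W → W'}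
    (h : ∀ x y, Tendsto (fun a => B a (u a x) (v a y)) l (𝓝 (B₀ x y))) :
    ∀ᶠ a in l, finrank 𝕜 (range B₀) ≤ finrank 𝕜 (range (B a)) := by
  obtain ⟨s, hs⟩ := B₀.exists_linearIndependent_comp
  let b := finBasis 𝕜 W
  have hrows : Tendsto (fun a i j => B a (u a (s i)) (v a (b j))) l (𝓝 fun i j => B₀ (s i) (b j)) :=
    tendsto_pi_nhds.2 fun i => tendsto_pi_nhds.2 fun j => h _ _
  have hrows₀ : LinearIndependent 𝕜 fun i j => B₀ (s i) (b j) := by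
    have hcomp : (fun i j => B₀ (s i) (b j)) = b.dualBasis.equivFun ∘ (B₀ ∘ s) := by
      ext i j
      simp
    rw [hcomp]
    exact hs.map' _ b.dualBasis.equivFun.ker
  filter_upwards [hrows.eventually hrows₀.eventually] with a ha
  let evalAt : Dual 𝕜 W' →ₗ[𝕜] Fin _ → 𝕜 := LinearMap.pi fun j => Dual.eval 𝕜 W' (v a (b j))
  simpa using (B a).card_le_finrank_range (s := u a ∘ s) (ha.of_comp (f := evalAt))

end LinearMap

section CoadjointForm

variable {g : Type*} [LieRing g] [LieAlgebra ℝ g]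

theorem center_le_ker_coadjointForm (ξ : Dual ℝ g) :
    (LieAlgebra.center ℝ g : Submodule ℝ g) ≤ LinearMap.ker (coadjointForm ξ) := by
  intro x hx
  ext y
  have hxy : ⁅x, y⁆ = 0 := by
    rw [← lie_skew, (LieModule.mem_maxTrivSubmodule ℝ g g x).mp hx y, neg_zero]
  simp [coadjointForm, hxy]

variable [FiniteDimensional ℝ g]

theorem finrank_range_coadjointForm_add_finrank_center_le (ξ : Dual ℝ g) :
    finrank ℝ (LinearMap.range (coadjointForm ξ)) + finrank ℝ (LieAlgebra.center ℝ g) ≤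
      finrank ℝ g := by
  rw [← (coadjointForm ξ).finrank_range_add_finrank_ker]
  exact Nat.add_le_add_left (Submodule.finrank_mono (center_le_ker_coadjointForm ξ)) _

theorem bddAbove_range_finrank_range_coadjointForm :
    BddAbove (Set.range fun ξ : Dual ℝ g => finrank ℝ (LinearMap.range (coadjointForm ξ))) :=
  ⟨finrank ℝ g, by
    rintro _ ⟨ξ, rfl⟩
    exact le_of_add_le_left (finrank_range_coadjointForm_add_finrank_center_le ξ)⟩

theorem finrank_range_coadjointForm_le_coadjointRank (ξ : Dual ℝ g) :
    finrank ℝ (LinearMap.range (coadjointForm ξ)) ≤ coadjointRank g :=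
  le_ciSup bddAbove_range_finrank_range_coadjointForm ξ

theorem exists_finrank_range_coadjointForm_eq_coadjointRank :
    ∃ ξ : Dual ℝ g, finrank ℝ (LinearMap.range (coadjointForm ξ)) = coadjointRank g :=
  Nat.sSup_mem (Set.range_nonempty _) bddAbove_range_finrank_range_coadjointForm

theorem coadjointRank_add_finrank_center_le :
    coadjointRank g + finrank ℝ (LieAlgebra.center ℝ g) ≤ finrank ℝ g := by
  obtain ⟨ξ, hξ⟩ := exists_finrank_range_coadjointForm_eq_coadjointRank (g := g)
  exact hξ ▸ finrank_range_coadjointForm_add_finrank_center_le ξ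

end CoadjointForm

theorem coadjointRank_eq_of_isContractionOf_of_squareIntegrable_general {g g₀ : Type*}
    [LieRing g] [LieAlgebra ℝ g] [FiniteDimensional ℝ g]
    [LieRing g₀] [LieAlgebra ℝ g₀] [FiniteDimensional ℝ g₀]
    [TopologicalSpace g₀] [IsTopologicalAddGroup g₀] [ContinuousSMul ℝ g₀] [T2Space g₀]
    (n : ℕ) (hdim : Module.finrank ℝ g = n)
    (hcenter : Module.finrank ℝ (LieAlgebra.center ℝ g) = 1)
    (hrank₀ : coadjointRank g₀ = n - 1)
    (h : IsContractionOf (fun x y : g => ⁅x, y⁆) (fun x y : g₀ => ⁅x, y⁆)) :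
    coadjointRank g = n - 1 := by
  obtain ⟨ξ₀, hξ₀⟩ := exists_finrank_range_coadjointForm_eq_coadjointRank (g := g₀)
  obtain ⟨I, hI, C, hC⟩ := h
  have hsemicont : ∀ᶠ r in 𝓝[I \ {0}] 0, finrank ℝ (LinearMap.range (coadjointForm ξ₀)) ≤
      finrank ℝ (LinearMap.range (coadjointForm (ξ₀ ∘ₗ ((C r).symm : g →ₗ[ℝ] g₀)))) :=
    LinearMap.eventually_finrank_range_le_of_tendsto (u := fun r => C r) (v := fun r => C r)
      fun x y => by
        simpa [coadjointForm, Function.comp_def] using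
          (ξ₀.continuous_of_finiteDimensional.tendsto _).comp (hC x y)
  obtain ⟨r, hr⟩ := hsemicont.exists
  have hupper := coadjointRank_add_finrank_center_le (g := g)
  have hlower := hr.trans (finrank_range_coadjointForm_le_coadjointRank _)
  omega

/-- Let `g` and `g₀` be nilpotent finite-dimensional real Lie algebras of the same dimension
`n`, each with 1-dimensional center.  If `rank (ad*_{g₀}) = n - 1` (square-integrable
representations modulo the center) and `g ⇝ g₀`, then `rank (ad*_g) = n - 1`. -/
theorem coadjointRank_eq_of_isContractionOf_of_squareIntegrable {g g₀ : Type*}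
    [LieRing g] [LieAlgebra ℝ g] [FiniteDimensional ℝ g] [LieRing.IsNilpotent g]
    [LieRing g₀] [LieAlgebra ℝ g₀] [FiniteDimensional ℝ g₀] [LieRing.IsNilpotent g₀]
    [TopologicalSpace g₀] [IsTopologicalAddGroup g₀] [ContinuousSMul ℝ g₀] [T2Space g₀]
    (n : ℕ) (hdim : Module.finrank ℝ g = n) (hdim₀ : Module.finrank ℝ g₀ = n)
    (hcenter : Module.finrank ℝ (LieAlgebra.center ℝ g) = 1)
    (hcenter₀ : Module.finrank ℝ (LieAlgebra.center ℝ g₀) = 1)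
    (hrank₀ : coadjointRank g₀ = n - 1)
    (h : IsContractionOf (fun x y : g => ⁅x, y⁆) (fun x y : g₀ => ⁅x, y⁆)) :
    coadjointRank g = n - 1 :=
  coadjointRank_eq_of_isContractionOf_of_squareIntegrable_general n hdim hcenter hrank₀ h
end

section
/- The Lie algebra A_{4,9}^0 is a contraction of su(2) × ℝ. -/
open Filter Topology

/-- The bracket of `su(2) × ℝ` on `Fin 4 → ℝ`: `[e₁,e₂] = e₃`, `[e₂,e₃] = e₁`,
`[e₃,e₁] = e₂`, with `e₄` central. -/
def su2RBracket (x y : Fin 4 → ℝ) : Fin 4 → ℝ :=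
  ![x 1 * y 2 - x 2 * y 1, x 2 * y 0 - x 0 * y 2, x 0 * y 1 - x 1 * y 0, 0]

/-- The bracket of `A_{4,9}^0` on `Fin 4 → ℝ`: `[e₂,e₃] = e₁`, `[e₂,e₄] = -e₃`,
`[e₃,e₄] = e₂`. -/
def a490Bracket (x y : Fin 4 → ℝ) : Fin 4 → ℝ :=
  ![x 1 * y 2 - x 2 * y 1, x 2 * y 3 - x 3 * y 2, -(x 1 * y 3 - x 3 * y 1), 0]

/-- The contraction map for `r ≠ 0`. -/
noncomputable def Cequiv (r : ℝ) (hr : r ≠ 0) : (Fin 4 → ℝ) ≃ₗ[ℝ] (Fin 4 → ℝ) where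
  toFun x := ![r ^ 2 * x 0 + x 3, r * x 1, r * x 2, x 3]
  invFun y := ![(y 0 - y 3) / r ^ 2, y 1 / r, y 2 / r, y 3]
  map_add' x y := by
    funext i; fin_cases i <;>
      simp [Matrix.cons_val_zero, Matrix.cons_val_one, Matrix.head_cons] <;> ring
  map_smul' c x := by
    funext i; fin_cases i <;>
      simp [Matrix.cons_val_zero, Matrix.cons_val_one, Matrix.head_cons] <;> ring
  left_inv x := by
    funext i; fin_cases i <;>
      simp [Matrix.cons_val_zero, Matrix.cons_val_one, Matrix.head_cons] <;>
      field_simp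
  right_inv y := by
    funext i; fin_cases i <;>
      simp [Matrix.cons_val_zero, Matrix.cons_val_one, Matrix.head_cons] <;>
      field_simp <;> ring

lemma Cequiv_apply (r : ℝ) (hr : r ≠ 0) (x : Fin 4 → ℝ) :
    Cequiv r hr x = ![r ^ 2 * x 0 + x 3, r * x 1, r * x 2, x 3] := rfl

lemma Cequiv_symm_apply (r : ℝ) (hr : r ≠ 0) (y : Fin 4 → ℝ) :
    (Cequiv r hr).symm y = ![(y 0 - y 3) / r ^ 2, y 1 / r, y 2 / r, y 3] := rfl

/-- The full family of contraction maps. -/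
noncomputable def Cfam (r : ℝ) : (Fin 4 → ℝ) ≃ₗ[ℝ] (Fin 4 → ℝ) :=
  if h : r = 0 then LinearEquiv.refl ℝ _ else Cequiv r h

/-- The Lie algebra `A_{4,9}^0` is a contraction of `su(2) × ℝ`. -/
theorem a490_isContractionOf_su2R : IsContractionOf su2RBracket a490Bracket := by
  have hsub : (Set.univ \ {0} : Set ℝ) = {(0 : ℝ)}ᶜ := by ext r; simp
  refine ⟨Set.univ, by rw [hsub]; infer_instance, Cfam, fun x y => ?_⟩
  have key : ∀ r : ℝ, r ≠ 0 →
      (Cfam r).symm (su2RBracket (Cfam r x) (Cfam r y)) =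
      ![x 1 * y 2 - x 2 * y 1,
        x 2 * y 3 - x 3 * y 2 + r ^ 2 * (x 2 * y 0 - x 0 * y 2),
        -(x 1 * y 3 - x 3 * y 1) + r ^ 2 * (x 0 * y 1 - x 1 * y 0), 0] := by
    intro r hr
    rw [Cfam, dif_neg hr]
    funext i
    fin_cases i <;>
      simp [Cequiv_apply, Cequiv_symm_apply, su2RBracket, Matrix.cons_val_zero,
        Matrix.cons_val_one, Matrix.head_cons] <;>
      field_simp <;> ring
  have hev : (fun r => (Cfam r).symm (su2RBracket (Cfam r x) (Cfam r y)))
      =ᶠ[𝓝[Set.univ \ {0}] (0 : ℝ)]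
      (fun r => ![x 1 * y 2 - x 2 * y 1,
        x 2 * y 3 - x 3 * y 2 + r ^ 2 * (x 2 * y 0 - x 0 * y 2),
        -(x 1 * y 3 - x 3 * y 1) + r ^ 2 * (x 0 * y 1 - x 1 * y 0), 0]) := by
    filter_upwards [self_mem_nhdsWithin] with r hr
    exact key r (by simpa using hr.2)
  refine Tendsto.congr' hev.symm ?_
  have hcont : Continuous (fun r : ℝ => ![x 1 * y 2 - x 2 * y 1,
      x 2 * y 3 - x 3 * y 2 + r ^ 2 * (x 2 * y 0 - x 0 * y 2),
      -(x 1 * y 3 - x 3 * y 1) + r ^ 2 * (x 0 * y 1 - x 1 * y 0), 0]) := by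
    refine continuous_pi fun i => ?_
    fin_cases i <;>
      simp [Matrix.cons_val_zero, Matrix.cons_val_one, Matrix.head_cons] <;>
      fun_prop
  have h0 := (hcont.tendsto 0).mono_left (nhdsWithin_le_nhds (s := Set.univ \ {0}))
  convert h0 using 2
  funext i
  fin_cases i <;>
    simp [a490Bracket, Matrix.cons_val_zero, Matrix.cons_val_one, Matrix.head_cons]
end
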